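/- arXiv:1901.06898 — 3 statements merged into one kernel-verified Lean document; each statement's English description precedes it below -/
import Mathlib

section
/- Let 0 < α < 1. Suppose f : ℝⁿ → ℝ satisfies the growth bound |f(x)| ≤ M(1+|x|)^α for all x, and the Zygmund second-difference bound |f(x+z) + f(x-z) - 2f(x)| ≤ N|z|^α for all x, z ∈ ℝⁿ. Then there is a constant C depending only on α, M, N (not on f otherwise) such that |f(x+z) - f(x)| ≤ C|z|^α for all x, z ∈ ℝⁿ. -/
/-!
The Zygmund bound at the point `x + z` with step `z` says that
`f (x + z) - f x` differs from `(f (x + 2 • z) - f x) / 2` by at most `N / 2 * ‖z‖ ^ α`.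
Iterating with steps `2 ^ k • z`, the quantities `aₖ = |f (x + 2 ^ k • z) - f x| / 2 ^ k` satisfy
`aₖ ≤ aₖ₊₁ + N / 2 * ‖z‖ ^ α * (2 ^ α / 2) ^ k`, a geometric error since `α < 1`; the growth
bound with `α < 1` forces `aₖ → 0`. Summing gives `a₀ ≤ N / (2 - 2 ^ α) * ‖z‖ ^ α`.
-/

open Filter Topology

lemma two_rpow_lt_two {α : ℝ} (hα : α < 1) : (2 : ℝ) ^ α < 2 := by
  simpa using Real.rpow_lt_rpow_of_exponent_lt one_lt_two hα

lemma le_div_one_sub_of_le_succ_add_geometric {a : ℕ → ℝ} {B c : ℝ} (hB : 0 ≤ B)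
    (hc0 : 0 ≤ c) (hc1 : c < 1) (hstep : ∀ k, a k ≤ a (k + 1) + B * c ^ k)
    (hlim : Tendsto a atTop (𝓝 0)) :
    a 0 ≤ B / (1 - c) := by
  have htelescope : ∀ m, a 0 ≤ a m + B * ∑ k ∈ Finset.range m, c ^ k := by
    intro m
    induction m with
    | zero => simp
    | succ m ih => rw [Finset.sum_range_succ]; linarith [hstep m]
  have hgeom : ∀ m, B * ∑ k ∈ Finset.range m, c ^ k ≤ B / (1 - c) := fun m => by
    have := geom_sum_Ico_le_of_lt_one (m := 0) (n := m) hc0 hc1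
    rw [← Finset.range_eq_Ico, pow_zero] at this
    simpa [div_eq_mul_one_div B] using mul_le_mul_of_nonneg_left this hB
  refine ge_of_tendsto' (by simpa using hlim.add_const (B / (1 - c))) fun m => ?_
  linarith [htelescope m, hgeom m]

section Zygmund

variable {E : Type*} [NormedAddCommGroup E] [NormedSpace ℝ E] {f : E → ℝ} {α M N : ℝ}

lemma abs_sub_le_half_abs_sub_two_smul_add
    (hzyg : ∀ x z, |f (x + z) + f (x - z) - 2 * f x| ≤ N * ‖z‖ ^ α) (x z : E) :
    |f (x + z) - f x| ≤ |f (x + (2 : ℝ) • z) - f x| / 2 + N / 2 * ‖z‖ ^ α := by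
  have h := hzyg (x + z) z
  rw [add_sub_cancel_right, add_assoc, ← two_smul ℝ z] at h
  have h₁ := abs_le.mp h
  have h₂ := le_abs_self (f (x + (2 : ℝ) • z) - f x)
  have h₃ := neg_abs_le (f (x + (2 : ℝ) • z) - f x)
  exact abs_le.mpr ⟨by linarith, by linarith⟩

lemma norm_two_pow_smul_rpow (k : ℕ) (z : E) :
    ‖(2 : ℝ) ^ k • z‖ ^ α = ((2 : ℝ) ^ α) ^ k * ‖z‖ ^ α := by
  rw [norm_smul, Real.norm_of_nonneg (by positivity),
    Real.mul_rpow (by positivity) (norm_nonneg z), Real.rpow_pow_comm zero_le_two]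

lemma abs_apply_add_two_pow_smul_le (hα : 0 ≤ α) (hM : 0 ≤ M)
    (hgrowth : ∀ y, |f y| ≤ M * (1 + ‖y‖) ^ α) (x z : E) (k : ℕ) :
    |f (x + (2 : ℝ) ^ k • z)| ≤ M * (1 + ‖x‖ + ‖z‖) ^ α * ((2 : ℝ) ^ α) ^ k := by
  have hnorm : 1 + ‖x + (2 : ℝ) ^ k • z‖ ≤ (2 : ℝ) ^ k * (1 + ‖x‖ + ‖z‖) := by
    have h₁ : ‖x + (2 : ℝ) ^ k • z‖ ≤ ‖x‖ + (2 : ℝ) ^ k * ‖z‖ := by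
      simpa [norm_smul] using norm_add_le x ((2 : ℝ) ^ k • z)
    have h₂ : (1 : ℝ) ≤ 2 ^ k := one_le_pow₀ one_le_two
    nlinarith [norm_nonneg x]
  calc |f (x + (2 : ℝ) ^ k • z)| ≤ M * (1 + ‖x + (2 : ℝ) ^ k • z‖) ^ α := hgrowth _
    _ ≤ M * ((2 : ℝ) ^ k * (1 + ‖x‖ + ‖z‖)) ^ α := by gcongr
    _ = M * (1 + ‖x‖ + ‖z‖) ^ α * ((2 : ℝ) ^ α) ^ k := by
      rw [Real.mul_rpow (by positivity) (by positivity), ← Real.rpow_pow_comm zero_le_two]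
      ring

lemma tendsto_abs_sub_div_two_pow (hα0 : 0 ≤ α) (hα1 : α < 1) (hM : 0 ≤ M)
    (hgrowth : ∀ y, |f y| ≤ M * (1 + ‖y‖) ^ α) (x z : E) :
    Tendsto (fun k : ℕ => |f (x + (2 : ℝ) ^ k • z) - f x| / 2 ^ k) atTop (𝓝 0) := by
  set K := M * (1 + ‖x‖ + ‖z‖) ^ α
  have hρ : (2 : ℝ) ^ α / 2 < 1 := (div_lt_one two_pos).2 (two_rpow_lt_two hα1)
  have hbound : ∀ k : ℕ, |f (x + (2 : ℝ) ^ k • z) - f x| / 2 ^ k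
      ≤ K * ((2 : ℝ) ^ α / 2) ^ k + |f x| * (1 / 2) ^ k := fun k => by
    have h := abs_apply_add_two_pow_smul_le hα0 hM hgrowth x z k
    calc |f (x + (2 : ℝ) ^ k • z) - f x| / 2 ^ k
        ≤ (K * ((2 : ℝ) ^ α) ^ k + |f x|) / 2 ^ k := by
          gcongr; linarith [abs_sub (f (x + (2 : ℝ) ^ k • z)) (f x)]
      _ = K * ((2 : ℝ) ^ α / 2) ^ k + |f x| * (1 / 2) ^ k := by
          rw [div_pow, div_pow, one_pow]; ring
  have hlim : Tendsto (fun k : ℕ => K * ((2 : ℝ) ^ α / 2) ^ k + |f x| * (1 / 2) ^ k)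
      atTop (𝓝 0) := by
    simpa using
      ((tendsto_pow_atTop_nhds_zero_of_lt_one (by positivity) hρ).const_mul K).add
        ((tendsto_pow_atTop_nhds_zero_of_lt_one (by norm_num) one_half_lt_one).const_mul |f x|)
  exact squeeze_zero (fun k => by positivity) hbound hlim

theorem abs_sub_le_of_zygmund (hα0 : 0 ≤ α) (hα1 : α < 1) (hM : 0 ≤ M) (hN : 0 ≤ N)
    (hgrowth : ∀ y, |f y| ≤ M * (1 + ‖y‖) ^ α)
    (hzyg : ∀ x z, |f (x + z) + f (x - z) - 2 * f x| ≤ N * ‖z‖ ^ α) (x z : E) :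
    |f (x + z) - f x| ≤ N / (2 - 2 ^ α) * ‖z‖ ^ α := by
  set a : ℕ → ℝ := fun k => |f (x + (2 : ℝ) ^ k • z) - f x| / 2 ^ k
  have hstep : ∀ k, a k ≤ a (k + 1) + N / 2 * ‖z‖ ^ α * ((2 : ℝ) ^ α / 2) ^ k := fun k => by
    have h := abs_sub_le_half_abs_sub_two_smul_add hzyg x ((2 : ℝ) ^ k • z)
    rw [smul_smul, ← pow_succ', norm_two_pow_smul_rpow] at h
    calc a k ≤ (|f (x + (2 : ℝ) ^ (k + 1) • z) - f x| / 2
          + N / 2 * (((2 : ℝ) ^ α) ^ k * ‖z‖ ^ α)) / 2 ^ k :=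
          div_le_div_of_nonneg_right h (by positivity)
      _ = a (k + 1) + N / 2 * ‖z‖ ^ α * ((2 : ℝ) ^ α / 2) ^ k := by
        simp only [a, div_pow, pow_succ]; ring
  have h := le_div_one_sub_of_le_succ_add_geometric (by positivity) (by positivity)
    ((div_lt_one two_pos).2 (two_rpow_lt_two hα1)) hstep
    (tendsto_abs_sub_div_two_pow hα0 hα1 hM hgrowth x z)
  calc |f (x + z) - f x| = a 0 := by simp [a]
    _ ≤ N / 2 * ‖z‖ ^ α / (1 - 2 ^ α / 2) := h
    _ = N / (2 - 2 ^ α) * ‖z‖ ^ α := by field_simp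

end Zygmund

theorem stmt_1 (n : ℕ) (α M N : ℝ) (hα0 : 0 < α) (hα1 : α < 1) (hM : 0 < M) (hN : 0 < N)
    (f : EuclideanSpace ℝ (Fin n) → ℝ)
    (hgrowth : ∀ x, |f x| ≤ M * (1 + ‖x‖) ^ α)
    (hzyg : ∀ x z, |f (x + z) + f (x - z) - 2 * f x| ≤ N * ‖z‖ ^ α) :
    ∃ C > 0, ∀ x z, |f (x + z) - f x| ≤ C * ‖z‖ ^ α :=
  ⟨N / (2 - 2 ^ α), div_pos hN (sub_pos.2 (two_rpow_lt_two hα1)),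
    abs_sub_le_of_zygmund hα0.le hα1 hM.le hN.le hgrowth hzyg⟩
end

section
/- Let 0 < α < 2 and let f : ℝⁿ → ℝ be bounded and measurable with Zygmund seminorm N_α[f] := sup_{z≠0} ‖f(·+z) + f(·−z) − 2f(·)‖_∞ / |z|^α < ∞. Let W̃_y f denote convolution with the Gauss kernel W̃_y(z) = (4πy)^{-n/2} e^{-|z|²/(4y)}. Then ‖∂_y W̃_y f‖_∞ ≤ C N_α[f] y^{-1+α/2} for all y > 0, with C depending only on n and α. -/
/-!
Differentiating under the integral, `∂_y (W̃_y f)(x) = ∫ ∂_y W̃_y(z) f(x - z) dz`. Since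
`∂_y W̃_y` is even and has integral zero (the heat kernel has total mass one for every `y`),
`2 ∂_y (W̃_y f)(x) = ∫ ∂_y W̃_y(z) (f(x + z) + f(x - z) - 2 f(x)) dz`, whose absolute value is
at most `N ∫ |∂_y W̃_y(z)| |z|^α dz`. Parabolic scaling `z = √y u` turns this moment into a
constant multiple of `y^(-1 + α/2)`.
-/

open MeasureTheory Real Module Set

theorem two_mul_abs_integral_mul_le_of_even {G : Type*} [MeasurableSpace G] [AddGroup G]
    [MeasurableNeg G] {μ : Measure G} [μ.IsNegInvariant] {D g w : G → ℝ} {c : ℝ}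
    (hD_even : D.Even) (hD_int : Integrable D μ) (hD_zero : ∫ z, D z ∂μ = 0)
    (hDg : Integrable (fun z => D z * g z) μ) (hDw : Integrable (fun z => |D z| * w z) μ)
    (hg : ∀ z, |g (-z) + g z - 2 * c| ≤ w z) :
    2 * |∫ z, D z * g z ∂μ| ≤ ∫ z, |D z| * w z ∂μ := by
  have hDg_neg : Integrable (fun z => D z * g (-z)) μ := by
    simpa only [hD_even _] using hDg.comp_neg
  have h_neg : ∫ z, D z * g (-z) ∂μ = ∫ z, D z * g z ∂μ := by
    simpa only [hD_even _, neg_neg] using (integral_neg_eq_self (fun z => D z * g (-z)) μ).symm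
  have h_sym : 2 * ∫ z, D z * g z ∂μ = ∫ z, D z * (g (-z) + g z - 2 * c) ∂μ := by
    simp only [mul_sub, mul_add, mul_comm (D _) (2 * c)]
    have hsum : Integrable (fun z => D z * g (-z) + D z * g z) μ := hDg_neg.add hDg
    rw [integral_sub hsum (hD_int.const_mul _), integral_add hDg_neg hDg,
      integral_const_mul, hD_zero, h_neg]
    ring
  calc 2 * |∫ z, D z * g z ∂μ| = |∫ z, D z * (g (-z) + g z - 2 * c) ∂μ| := by
        rw [← h_sym, abs_mul, abs_two]
    _ ≤ ∫ z, |D z * (g (-z) + g z - 2 * c)| ∂μ := abs_integral_le_integral_abs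
    _ ≤ ∫ z, |D z| * w z ∂μ := by
        refine integral_mono_of_nonneg (.of_forall fun z => abs_nonneg _) hDw
          (.of_forall fun z => ?_)
        simpa only [abs_mul] using mul_le_mul_of_nonneg_left (hg z) (abs_nonneg (D z))

theorem integrable_norm_rpow_mul_exp_neg_mul_sq_norm {E : Type*} [NormedAddCommGroup E]
    [NormedSpace ℝ E] [FiniteDimensional ℝ E] [MeasurableSpace E] [BorelSpace E]
    (μ : Measure E) [μ.IsAddHaarMeasure] {b p : ℝ} (hb : 0 < b) (hp : -1 < p) :
    Integrable (fun v : E => ‖v‖ ^ p * exp (-b * ‖v‖ ^ 2)) μ := by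
  rcases subsingleton_or_nontrivial E with hE | hE
  · exact Integrable.of_finite
  rw [integrable_fun_norm_addHaar μ (f := fun t => t ^ p * exp (-b * t ^ 2))]
  have hs : -1 < p + (finrank ℝ E - 1 : ℕ) := by
    linarith [Nat.cast_nonneg (α := ℝ) (finrank ℝ E - 1)]
  refine (integrableOn_rpow_mul_exp_neg_mul_sq hb hs).congr_fun (fun t (ht : 0 < t) => ?_)
    measurableSet_Ioi
  simp only [smul_eq_mul, rpow_add ht, rpow_natCast]
  ring

noncomputable def heatKernel (V : Type*) [NormedAddCommGroup V] [InnerProductSpace ℝ V]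
    (s : ℝ) (z : V) : ℝ :=
  (4 * π * s) ^ (-(finrank ℝ V : ℝ) / 2) * exp (-‖z‖ ^ 2 / (4 * s))

noncomputable def heatKernelDeriv (V : Type*) [NormedAddCommGroup V] [InnerProductSpace ℝ V]
    (s : ℝ) (z : V) : ℝ :=
  heatKernel V s z * (-(finrank ℝ V : ℝ) / (2 * s) + ‖z‖ ^ 2 / (4 * s ^ 2))

section HeatKernel

variable {V : Type*} [NormedAddCommGroup V] [InnerProductSpace ℝ V]

theorem heatKernel_pos {s : ℝ} (hs : 0 < s) (z : V) : 0 < heatKernel V s z := by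
  unfold heatKernel; positivity

theorem even_heatKernelDeriv (s : ℝ) : (heatKernelDeriv V s).Even := fun z => by
  simp only [heatKernelDeriv, heatKernel, norm_neg]

theorem hasDerivAt_heatKernel (z : V) {s : ℝ} (hs : 0 < s) :
    HasDerivAt (heatKernel V · z) (heatKernelDeriv V s z) s := by
  set q : ℝ := -(finrank ℝ V : ℝ) / 2
  have h4πs : 0 < 4 * π * s := by positivity
  have h_pow : HasDerivAt (fun t : ℝ => (4 * π * t) ^ q) (4 * π * q * (4 * π * s) ^ (q - 1)) s :=
    by simpa using ((hasDerivAt_id s).const_mul (4 * π)).rpow_const (p := q) (Or.inl h4πs.ne')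
  have h_arg : HasDerivAt (fun t : ℝ => -‖z‖ ^ 2 / (4 * t)) (‖z‖ ^ 2 / (4 * s ^ 2)) s := by
    have h := (hasDerivAt_inv hs.ne').const_mul (-‖z‖ ^ 2 / 4)
    rw [show (fun t : ℝ => -‖z‖ ^ 2 / (4 * t)) = fun t => -‖z‖ ^ 2 / 4 * t⁻¹ by ext t; ring]
    exact h.congr_deriv (by ring)
  refine (h_pow.mul h_arg.exp).congr_deriv ?_
  rw [heatKernelDeriv, heatKernel, rpow_sub h4πs, rpow_one]
  simp only [q]
  field_simp

theorem abs_heatKernelDeriv_le {s : ℝ} (hs : 0 < s) (z : V) :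
    |heatKernelDeriv V s z| ≤
      heatKernel V s z * ((finrank ℝ V : ℝ) / (2 * s) + ‖z‖ ^ 2 / (4 * s ^ 2)) := by
  rw [heatKernelDeriv, abs_mul, abs_of_pos (heatKernel_pos hs z)]
  refine mul_le_mul_of_nonneg_left ?_ (heatKernel_pos hs z).le
  refine (abs_add_le _ _).trans_eq ?_
  rw [abs_div, abs_neg, abs_of_nonneg (by positivity : (0 : ℝ) ≤ ‖z‖ ^ 2 / (4 * s ^ 2))]
  simp [abs_of_pos hs]

theorem heatKernel_le_of_mem_Icc {a b s : ℝ} (ha : 0 < a) (hs : s ∈ Icc a b) (z : V) :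
    heatKernel V s z ≤ (b / a) ^ ((finrank ℝ V : ℝ) / 2) * heatKernel V b z := by
  have hb : 0 < b := ha.trans_le (hs.1.trans hs.2)
  have hprefactor : (4 * π * a) ^ (-(finrank ℝ V : ℝ) / 2)
      = (b / a) ^ ((finrank ℝ V : ℝ) / 2) * (4 * π * b) ^ (-(finrank ℝ V : ℝ) / 2) := by
    rw [show 4 * π * a = (b / a)⁻¹ * (4 * π * b) by field_simp, mul_rpow (by positivity)
      (by positivity), inv_rpow (by positivity), ← rpow_neg (by positivity), neg_div, neg_neg]
  rw [heatKernel, heatKernel, ← mul_assoc, ← hprefactor]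
  gcongr ?_ * exp ?_
  · exact rpow_le_rpow_of_nonpos (by positivity) (by gcongr; exact hs.1)
      (div_nonpos_of_nonpos_of_nonneg (by simp) (by norm_num))
  · rw [neg_div, neg_div, neg_le_neg_iff]
    gcongr
    · linarith [hs.1]
    · exact hs.2

theorem abs_heatKernelDeriv_le_of_mem_Icc {a b s : ℝ} (ha : 0 < a) (hs : s ∈ Icc a b) (z : V) :
    |heatKernelDeriv V s z| ≤ (b / a) ^ ((finrank ℝ V : ℝ) / 2) * heatKernel V b z *
      ((finrank ℝ V : ℝ) / (2 * a) + ‖z‖ ^ 2 / (4 * a ^ 2)) := by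
  have hs0 : 0 < s := ha.trans_le hs.1
  refine (abs_heatKernelDeriv_le hs0 z).trans ?_
  have hK := heatKernel_le_of_mem_Icc ha hs z
  gcongr
  · exact (heatKernel_pos hs0 z).le.trans hK
  all_goals exact hs.1

theorem heatKernel_sqrt_smul {y : ℝ} (hy : 0 < y) (u : V) :
    heatKernel V y (√y • u) = (√y ^ finrank ℝ V)⁻¹ * heatKernel V 1 u := by
  have hscale : (√y ^ finrank ℝ V)⁻¹ = y ^ (-(finrank ℝ V : ℝ) / 2) := by
    rw [sqrt_eq_rpow, ← rpow_natCast, ← rpow_mul hy.le, ← rpow_neg hy.le]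
    ring_nf
  have hexp : -‖√y • u‖ ^ 2 / (4 * y) = -‖u‖ ^ 2 / (4 * 1) := by
    rw [norm_smul, norm_of_nonneg (sqrt_nonneg y), mul_pow, sq_sqrt hy.le]
    field_simp
  rw [heatKernel, heatKernel, hexp, hscale, show 4 * π * y = y * (4 * π * 1) by ring,
    mul_rpow hy.le (by positivity)]
  ring

theorem continuous_heatKernel (s : ℝ) : Continuous (heatKernel V s) := by
  unfold heatKernel; fun_prop

theorem continuous_heatKernelDeriv (s : ℝ) : Continuous (heatKernelDeriv V s) := by
  unfold heatKernelDeriv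
  exact (continuous_heatKernel s).mul (by fun_prop)

theorem abs_heatKernelDeriv_mul_norm_rpow_le {y α : ℝ} (hy : 0 < y) (hα : -1 < α) (z : V) :
    |heatKernelDeriv V y z| * ‖z‖ ^ α ≤
      (finrank ℝ V : ℝ) / (2 * y) * (‖z‖ ^ α * heatKernel V y z) +
        (4 * y ^ 2)⁻¹ * (‖z‖ ^ (α + 2) * heatKernel V y z) := by
  rw [rpow_add' (norm_nonneg z) (by linarith), rpow_two]
  calc |heatKernelDeriv V y z| * ‖z‖ ^ α
      ≤ heatKernel V y z * ((finrank ℝ V : ℝ) / (2 * y) + ‖z‖ ^ 2 / (4 * y ^ 2)) * ‖z‖ ^ α :=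
        mul_le_mul_of_nonneg_right (abs_heatKernelDeriv_le hy z) (by positivity)
    _ = _ := by ring

variable [FiniteDimensional ℝ V] [MeasurableSpace V] [BorelSpace V]

theorem integrable_norm_rpow_mul_heatKernel {s p : ℝ} (hs : 0 < s) (hp : -1 < p) :
    Integrable (fun z : V => ‖z‖ ^ p * heatKernel V s z) := by
  refine ((integrable_norm_rpow_mul_exp_neg_mul_sq_norm volume (b := 1 / (4 * s))
    (by positivity) hp).const_mul ((4 * π * s) ^ (-(finrank ℝ V : ℝ) / 2))).congr
    (.of_forall fun z => ?_)
  simp only [heatKernel, show -‖z‖ ^ 2 / (4 * s) = -(1 / (4 * s)) * ‖z‖ ^ 2 by ring]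
  ring

theorem integrable_heatKernel {s : ℝ} (hs : 0 < s) : Integrable (heatKernel V s) := by
  simpa using integrable_norm_rpow_mul_heatKernel (V := V) hs (p := 0) (by norm_num)

theorem integrable_norm_sq_mul_heatKernel {s : ℝ} (hs : 0 < s) :
    Integrable (fun z : V => ‖z‖ ^ 2 * heatKernel V s z) := by
  simpa [rpow_two] using integrable_norm_rpow_mul_heatKernel (V := V) hs (p := 2) (by norm_num)

theorem integral_heatKernel {s : ℝ} (hs : 0 < s) : ∫ z, heatKernel V s z = 1 := by
  simp only [heatKernel, integral_const_mul, neg_div, div_eq_inv_mul (‖_‖ ^ 2), ← neg_mul]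
  rw [GaussianFourier.integral_rexp_neg_mul_sq_norm (by positivity),
    show π / (4 * s)⁻¹ = 4 * π * s by rw [div_inv_eq_mul]; ring, ← rpow_add (by positivity)]
  simp

theorem integral_norm_rpow_mul_heatKernel {y : ℝ} (hy : 0 < y) (p : ℝ) :
    ∫ z : V, ‖z‖ ^ p * heatKernel V y z = y ^ (p / 2) * ∫ z : V, ‖z‖ ^ p * heatKernel V 1 z := by
  have hsqrt : 0 < √y := sqrt_pos.2 hy
  have h := Measure.integral_comp_smul_of_nonneg volume
    (fun z : V => ‖z‖ ^ p * heatKernel V y z) √y (hR := hsqrt.le)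
  simp only [heatKernel_sqrt_smul hy, norm_smul, norm_of_nonneg hsqrt.le,
    mul_rpow hsqrt.le (norm_nonneg _), smul_eq_mul] at h
  rw [show (fun u : V => √y ^ p * ‖u‖ ^ p * ((√y ^ finrank ℝ V)⁻¹ * heatKernel V 1 u))
      = fun u => (√y ^ finrank ℝ V)⁻¹ * (√y ^ p * (‖u‖ ^ p * heatKernel V 1 u)) by ext; ring,
    integral_const_mul, integral_const_mul] at h
  rw [← mul_left_cancel₀ (inv_ne_zero (pow_ne_zero _ hsqrt.ne')) h, sqrt_eq_rpow,
    ← rpow_mul hy.le]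
  ring_nf

theorem hasDerivAt_integral_heatKernel_mul {g : V → ℝ} {B y : ℝ} (hy : 0 < y)
    (hg : AEStronglyMeasurable g) (hB : ∀ z, |g z| ≤ B) :
    Integrable (fun z => heatKernelDeriv V y z * g z) ∧
      HasDerivAt (fun s => ∫ z, heatKernel V s z * g z) (∫ z, heatKernelDeriv V y z * g z) y := by
  set d : ℝ := (finrank ℝ V : ℝ)
  have hg_bdd : ∀ᵐ z, ‖g z‖ ≤ B := .of_forall hB
  have h_bound (z : V) (s : ℝ) (hs : s ∈ Icc (y / 2) (2 * y)) :
      ‖heatKernelDeriv V s z * g z‖ ≤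
        B * 4 ^ (d / 2) * (d / y * heatKernel V (2 * y) z +
          (y ^ 2)⁻¹ * (‖z‖ ^ 2 * heatKernel V (2 * y) z)) := by
    have hD := abs_heatKernelDeriv_le_of_mem_Icc (half_pos hy) hs z
    rw [show 2 * y / (y / 2) = 4 by field_simp; norm_num] at hD
    rw [norm_mul, norm_eq_abs, mul_comm B]
    calc |heatKernelDeriv V s z| * |g z| ≤ _ * B :=
          mul_le_mul hD (hB z) (abs_nonneg _) ((abs_nonneg _).trans hD)
      _ = _ := by field_simp; ring
  refine hasDerivAt_integral_of_dominated_loc_of_deriv_le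
    (Icc_mem_nhds (by linarith) (by linarith))
    (.of_forall fun s => (continuous_heatKernel s).aestronglyMeasurable.mul hg)
    ((integrable_heatKernel hy).mul_bdd hg hg_bdd)
    ((continuous_heatKernelDeriv y).aestronglyMeasurable.mul hg)
    (.of_forall h_bound) ?_ (.of_forall fun z s hs => ?_)
  · exact ((((integrable_heatKernel (by positivity)).const_mul _).add
      ((integrable_norm_sq_mul_heatKernel (by positivity)).const_mul _)).const_mul _)
  · exact (hasDerivAt_heatKernel z (by linarith [hs.1])).mul_const (g z)

theorem integral_heatKernelDeriv {y : ℝ} (hy : 0 < y) : ∫ z, heatKernelDeriv V y z = 0 := by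
  have h := (hasDerivAt_integral_heatKernel_mul (V := V) hy aestronglyMeasurable_const
    (fun _ => (abs_one).le)).2
  simp only [mul_one] at h
  refine h.unique ((hasDerivAt_const y (1 : ℝ)).congr_of_eventuallyEq ?_)
  filter_upwards [Ioi_mem_nhds hy] with s hs using integral_heatKernel hs

theorem integrable_heatKernelDeriv {y : ℝ} (hy : 0 < y) : Integrable (heatKernelDeriv V y) := by
  simpa using (hasDerivAt_integral_heatKernel_mul (V := V) hy aestronglyMeasurable_const
    (fun _ => (abs_one).le)).1

theorem integrable_abs_heatKernelDeriv_mul_norm_rpow {y α : ℝ} (hy : 0 < y) (hα : -1 < α) :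
    Integrable (fun z : V => |heatKernelDeriv V y z| * ‖z‖ ^ α) := by
  have hD := (continuous_heatKernelDeriv (V := V) y).measurable
  have h_major : Integrable (fun z : V =>
      (finrank ℝ V : ℝ) / (2 * y) * (‖z‖ ^ α * heatKernel V y z) +
        (4 * y ^ 2)⁻¹ * (‖z‖ ^ (α + 2) * heatKernel V y z)) :=
    ((integrable_norm_rpow_mul_heatKernel hy hα).const_mul _).add
      ((integrable_norm_rpow_mul_heatKernel hy (by linarith)).const_mul _)
  have h_meas : Measurable fun z : V => |heatKernelDeriv V y z| * ‖z‖ ^ α := by fun_prop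
  refine h_major.mono' h_meas.aestronglyMeasurable (.of_forall fun z => ?_)
  rw [norm_of_nonneg (by positivity)]
  exact abs_heatKernelDeriv_mul_norm_rpow_le hy hα z

theorem exists_integral_abs_heatKernelDeriv_mul_norm_rpow_le {α : ℝ} (hα : -1 < α) :
    ∃ C ≥ 0, ∀ y > 0, ∫ z : V, |heatKernelDeriv V y z| * ‖z‖ ^ α ≤ C * y ^ (-1 + α / 2) := by
  set M : ℝ → ℝ := fun p => ∫ z : V, ‖z‖ ^ p * heatKernel V 1 z
  have hM (p : ℝ) : 0 ≤ M p :=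
    integral_nonneg fun z => mul_nonneg (by positivity) (heatKernel_pos one_pos z).le
  refine ⟨(finrank ℝ V : ℝ) / 2 * M α + M (α + 2) / 4,
    add_nonneg (mul_nonneg (by positivity) (hM α)) (div_nonneg (hM _) (by norm_num)),
    fun y hy => ?_⟩
  have hα2 : -1 < α + 2 := by linarith
  calc ∫ z : V, |heatKernelDeriv V y z| * ‖z‖ ^ α
      ≤ ∫ z : V, ((finrank ℝ V : ℝ) / (2 * y) * (‖z‖ ^ α * heatKernel V y z) +
          (4 * y ^ 2)⁻¹ * (‖z‖ ^ (α + 2) * heatKernel V y z)) :=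
        integral_mono (integrable_abs_heatKernelDeriv_mul_norm_rpow hy hα)
          (((integrable_norm_rpow_mul_heatKernel hy hα).const_mul _).add
            ((integrable_norm_rpow_mul_heatKernel hy hα2).const_mul _))
          (abs_heatKernelDeriv_mul_norm_rpow_le hy hα)
    _ = (finrank ℝ V : ℝ) / (2 * y) * (y ^ (α / 2) * M α) +
          (4 * y ^ 2)⁻¹ * (y ^ ((α + 2) / 2) * M (α + 2)) := by
        rw [integral_add ((integrable_norm_rpow_mul_heatKernel hy hα).const_mul _)
            ((integrable_norm_rpow_mul_heatKernel hy hα2).const_mul _),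
          integral_const_mul, integral_const_mul, integral_norm_rpow_mul_heatKernel hy,
          integral_norm_rpow_mul_heatKernel hy]
    _ = _ := by
        rw [show (α + 2) / 2 = α / 2 + 1 by ring, show -1 + α / 2 = α / 2 + -1 by ring,
          rpow_add hy, rpow_add hy, rpow_one, rpow_neg_one]
        field_simp

end HeatKernel

theorem stmt_5_general (n : ℕ) (α N : ℝ) (hα0 : 0 < α) (hN : 0 ≤ N)
    (f : EuclideanSpace ℝ (Fin n) → ℝ) (hf : Measurable f)
    (hbd : ∃ B, ∀ x, |f x| ≤ B)
    (hzyg : ∀ x z, |f (x + z) + f (x - z) - 2 * f x| ≤ N * ‖z‖ ^ α) :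
    ∃ C > 0, ∀ y > (0:ℝ), ∀ x : EuclideanSpace ℝ (Fin n),
      |deriv (fun s : ℝ => ∫ z : EuclideanSpace ℝ (Fin n),
          (4 * Real.pi * s) ^ (-(n:ℝ)/2) * Real.exp (-‖z‖ ^ 2 / (4 * s)) * f (x - z)) y|
        ≤ C * N * y ^ (-1 + α / 2) := by
  obtain ⟨B, hB⟩ := hbd
  obtain ⟨C, hC, h_moment⟩ := exists_integral_abs_heatKernelDeriv_mul_norm_rpow_le
    (V := EuclideanSpace ℝ (Fin n)) (by linarith : -1 < α)
  -- `C` is `0` when `n = 0`, hence the `+ 1`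
  refine ⟨C / 2 + 1, by positivity, fun y hy x => ?_⟩
  have h_kernel : (fun s : ℝ => ∫ z : EuclideanSpace ℝ (Fin n),
      (4 * π * s) ^ (-(n:ℝ)/2) * exp (-‖z‖ ^ 2 / (4 * s)) * f (x - z))
      = fun s => ∫ z, heatKernel _ s z * f (x - z) := by
    simp only [heatKernel, finrank_euclideanSpace_fin]
  obtain ⟨h_int, h_deriv⟩ := hasDerivAt_integral_heatKernel_mul (g := fun z => f (x - z)) hy
    (hf.comp (measurable_const.sub measurable_id)).aestronglyMeasurable (fun z => hB (x - z))
  have h_cancel := two_mul_abs_integral_mul_le_of_even (even_heatKernelDeriv y)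
    (integrable_heatKernelDeriv hy) (integral_heatKernelDeriv hy) h_int
    (by simpa only [mul_assoc] using
      (integrable_abs_heatKernelDeriv_mul_norm_rpow hy (by linarith : -1 < α)).mul_const N)
    (c := f x) (fun z => by simpa only [sub_neg_eq_add, mul_comm N] using hzyg x z)
  simp only [← mul_assoc, integral_mul_const] at h_cancel
  rw [h_kernel, h_deriv.deriv]
  have h_nonneg : 0 ≤ N * y ^ (-1 + α / 2) := by positivity
  nlinarith [h_moment y hy]

theorem stmt_5 (n : ℕ) (α N : ℝ) (hα0 : 0 < α) (hα2 : α < 2) (hN : 0 ≤ N)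
    (f : EuclideanSpace ℝ (Fin n) → ℝ) (hf : Measurable f)
    (hbd : ∃ B, ∀ x, |f x| ≤ B)
    (hzyg : ∀ x z, |f (x + z) + f (x - z) - 2 * f x| ≤ N * ‖z‖ ^ α) :
    ∃ C > 0, ∀ y > (0:ℝ), ∀ x : EuclideanSpace ℝ (Fin n),
      |deriv (fun s : ℝ => ∫ z : EuclideanSpace ℝ (Fin n),
          (4 * Real.pi * s) ^ (-(n:ℝ)/2) * Real.exp (-‖z‖ ^ 2 / (4 * s)) * f (x - z)) y|
        ≤ C * N * y ^ (-1 + α / 2) :=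
  stmt_5_general n α N hα0 hN f hf hbd hzyg
end

section
/- Let 0 < β < α, m = ⌊(α−β)/2⌋ + 1, ℓ = ⌊β/2⌋ + 1 (so m + ℓ > α/2). Then there is a constant C such that for all y > 0, ∫_0^y ( ∫_{[0,t]^ℓ} (y + s₁ + ⋯ + s_ℓ)^{-(m+ℓ)+α/2} ds₁⋯ds_ℓ ) t^{-1-β/2} dt ≤ C y^{-m + (α-β)/2}. -/
/-!
The exponent `e = -(m + ℓ) + α / 2` is nonpositive and the `sᵢ` are nonnegative, so the inner
integrand is at most `y ^ e` and the inner integral at most `y ^ e * t ^ ℓ`. Since `ℓ > β / 2`,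
the remaining power `t ^ (ℓ - 1 - β / 2)` is integrable at `0`, and integrating it over `(0, y]`
gives `y ^ e * y ^ (ℓ - β / 2) / (ℓ - β / 2) = C * y ^ (-m + (α - β) / 2)`.
-/

open MeasureTheory Real Set

variable {ι : Type*} [Fintype ι]

theorem volume_real_pi_Icc_zero {t : ℝ} (ht : 0 ≤ t) :
    volume.real (univ.pi fun _ : ι ↦ Icc (0 : ℝ) t) = t ^ Fintype.card ι := by
  rw [measureReal_def, volume_pi_pi]
  simp [ht]

theorem sum_nonneg_of_mem_pi_Icc_zero {t : ℝ} {s : ι → ℝ}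
    (hs : s ∈ univ.pi fun _ : ι ↦ Icc (0 : ℝ) t) : 0 ≤ ∑ i, s i :=
  Finset.sum_nonneg fun i _ ↦ (hs i (mem_univ i)).1

theorem setIntegral_pi_Icc_rpow_add_sum_nonneg {y e t : ℝ} (hy : 0 ≤ y) :
    0 ≤ ∫ s in univ.pi fun _ : ι ↦ Icc (0 : ℝ) t, (y + ∑ i, s i) ^ e :=
  setIntegral_nonneg (.univ_pi fun _ ↦ measurableSet_Icc) fun _ hs ↦
    rpow_nonneg (add_nonneg hy (sum_nonneg_of_mem_pi_Icc_zero hs)) e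

theorem setIntegral_pi_Icc_rpow_add_sum_le {y e t : ℝ} (hy : 0 < y) (he : e ≤ 0)
    (ht : 0 ≤ t) :
    ∫ s in univ.pi fun _ : ι ↦ Icc (0 : ℝ) t, (y + ∑ i, s i) ^ e ≤
      y ^ e * t ^ Fintype.card ι := by
  rw [← volume_real_pi_Icc_zero ht]
  refine (Real.le_norm_self _).trans <| norm_setIntegral_le_of_norm_le_const
    (isCompact_univ_pi fun _ ↦ isCompact_Icc).measure_lt_top fun s hs ↦ ?_
  have hs₀ := sum_nonneg_of_mem_pi_Icc_zero hs
  rw [norm_of_nonneg (by positivity)]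
  exact rpow_le_rpow_of_nonpos hy (by linarith) he

theorem setIntegral_Ioc_zero_le_of_le_mul_rpow {f : ℝ → ℝ} {A p y : ℝ}
    (hy : 0 ≤ y) (hp : -1 < p) (hf₀ : ∀ t ∈ Ioc 0 y, 0 ≤ f t)
    (hf : ∀ t ∈ Ioc 0 y, f t ≤ A * t ^ p) :
    ∫ t in Ioc 0 y, f t ≤ A * (y ^ (p + 1) / (p + 1)) := by
  have hint : IntegrableOn (fun t ↦ A * t ^ p) (Ioc 0 y) :=
    (intervalIntegral.intervalIntegrable_rpow' hp).1.const_mul A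
  calc ∫ t in Ioc 0 y, f t ≤ ∫ t in Ioc 0 y, A * t ^ p :=
        integral_mono_of_nonneg (ae_restrict_of_forall_mem measurableSet_Ioc hf₀) hint
          (ae_restrict_of_forall_mem measurableSet_Ioc hf)
    _ = A * (y ^ (p + 1) / (p + 1)) := by
      rw [integral_const_mul, ← intervalIntegral.integral_of_le hy, integral_rpow (.inl hp),
        zero_rpow (by linarith), sub_zero]

theorem stmt_9_general (α β : ℝ) (m ℓ : ℕ)
    (hm : m = ⌊(α - β) / 2⌋₊ + 1) (hℓ : ℓ = ⌊β / 2⌋₊ + 1) :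
    ∃ C > 0, ∀ y > (0:ℝ),
      (∫ t in Set.Ioc (0:ℝ) y,
          (∫ s : Fin ℓ → ℝ in Set.univ.pi fun _ => Set.Icc (0:ℝ) t,
            (y + ∑ i, s i) ^ (-((m:ℝ) + (ℓ:ℝ)) + α / 2)) * t ^ (-1 - β / 2)) ≤
        C * y ^ (-(m:ℝ) + (α - β) / 2) := by
  have hℓβ : β / 2 < ℓ := by rw [hℓ]; push_cast; exact Nat.lt_floor_add_one _
  have hmαβ : (α - β) / 2 < m := by rw [hm]; push_cast; exact Nat.lt_floor_add_one _
  set e : ℝ := -((m:ℝ) + ℓ) + α / 2 with he_def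
  set p : ℝ := ℓ - 1 - β / 2 with hp_def
  have he : e ≤ 0 := by linarith
  have hp : -1 < p := by linarith
  refine ⟨(p + 1)⁻¹, inv_pos.2 (by linarith), fun y hy ↦ ?_⟩
  calc _ ≤ y ^ e * (y ^ (p + 1) / (p + 1)) := by
        refine setIntegral_Ioc_zero_le_of_le_mul_rpow hy.le hp
          (fun t ht ↦ mul_nonneg (setIntegral_pi_Icc_rpow_add_sum_nonneg hy.le)
            (rpow_nonneg ht.1.le _))
          fun t ⟨ht₀, _⟩ ↦ ?_
        calc _ ≤ y ^ e * t ^ ℓ * t ^ (-1 - β / 2) := by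
              gcongr
              simpa using setIntegral_pi_Icc_rpow_add_sum_le (ι := Fin ℓ) hy he ht₀.le
          _ = y ^ e * t ^ p := by
              rw [mul_assoc, ← rpow_natCast, ← rpow_add ht₀, hp_def]
              ring_nf
    _ = (p + 1)⁻¹ * y ^ (-(m:ℝ) + (α - β) / 2) := by
      rw [mul_div_assoc', ← rpow_add hy, div_eq_inv_mul, he_def, hp_def]
      ring_nf

theorem stmt_9 (α β : ℝ) (hβ0 : 0 < β) (hβα : β < α) (m ℓ : ℕ)
    (hm : m = ⌊(α - β) / 2⌋₊ + 1) (hℓ : ℓ = ⌊β / 2⌋₊ + 1) :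
    ∃ C > 0, ∀ y > (0:ℝ),
      (∫ t in Set.Ioc (0:ℝ) y,
          (∫ s : Fin ℓ → ℝ in Set.univ.pi fun _ => Set.Icc (0:ℝ) t,
            (y + ∑ i, s i) ^ (-((m:ℝ) + (ℓ:ℝ)) + α / 2)) * t ^ (-1 - β / 2)) ≤
        C * y ^ (-(m:ℝ) + (α - β) / 2) :=
  stmt_9_general α β m ℓ hm hℓ
end
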